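/- arXiv:2504.06688 — 9 statements merged into one kernel-verified Lean document; each statement's English description precedes it below -/
import Mathlib

section
/- Let σ be a lock-well-formed execution and let e1, e2 be events of σ with ThreadOf(e1) ≠ ThreadOf(e2). Then the following three statements are equivalent: (i) Cft(e1)(ThreadOf(e1)) ≤ Cft(e2)(ThreadOf(e1)); (ii) Cft(e1) ⊑ Cft(e2); (iii) e1 ≤HB e2. -/
open scoped Classical

noncomputable section

/-- An operation: read/write of a memory location, or acquire/release of a lock. -/
inductive Op : Type where
  | read (x : ℕ)
  | write (x : ℕ)
  | acq (l : ℕ)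
  | rel (l : ℕ)
  deriving DecidableEq

/-- An execution: a finite sequence of (pairwise-distinct) events, each with a
thread identifier and an operation.  Events are identified with their index
in the sequence, so trace order is the order on `Fin n`. -/
structure Execution : Type where
  n : ℕ
  thread : Fin n → ℕ
  op : Fin n → Op

/-- `o` is a release operation. -/
def Op.isRel (o : Op) : Prop := ∃ l, o = Op.rel l

/-- `o` is a read or write operation. -/
def Op.isAccess (o : Op) : Prop := ∃ x, o = Op.read x ∨ o = Op.write x

/-- `o` accesses memory location `x`. -/
def Op.accesses (o : Op) (x : ℕ) : Prop := o = Op.read x ∨ o = Op.write x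

namespace Execution

/-- Event `e` operates on lock `l`. -/
def touches (σ : Execution) (l : ℕ) (e : Fin σ.n) : Prop :=
  σ.op e = Op.acq l ∨ σ.op e = Op.rel l

/-- Lock-well-formedness: for every lock `l`, the subsequence of events on `l`
alternates acquires and releases beginning with an acquire (an event on `l` is
an acquire iff an even number of events on `l` precede it), and each release of
`l` is performed by the same thread as the immediately preceding acquire of `l`. -/
def LockWellFormed (σ : Execution) : Prop :=
  ∀ l : ℕ, ∀ e : Fin σ.n, σ.touches l e →
    ((σ.op e = Op.acq l ↔
        Even ((Finset.univ.filter (fun f => f < e ∧ σ.touches l f)).card)) ∧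
     (σ.op e = Op.rel l →
        ∃ f : Fin σ.n, f < e ∧ σ.op f = Op.acq l ∧ σ.thread f = σ.thread e ∧
          ∀ g : Fin σ.n, f < g → g < e → ¬ σ.touches l g))

/-- Nonstrict thread order `e1 ≤tho e2`. -/
def tho (σ : Execution) (e1 e2 : Fin σ.n) : Prop :=
  e1 ≤ e2 ∧ σ.thread e1 = σ.thread e2

/-- Strict thread order `e1 <tho e2`. -/
def sTho (σ : Execution) (e1 e2 : Fin σ.n) : Prop :=
  e1 < e2 ∧ σ.thread e1 = σ.thread e2

/-- One step of happens-before: thread order, or a release–acquire edge. -/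
def hbStep (σ : Execution) (e1 e2 : Fin σ.n) : Prop :=
  σ.tho e1 e2 ∨ (e1 < e2 ∧ ∃ l, σ.op e1 = Op.rel l ∧ σ.op e2 = Op.acq l)

/-- Happens-before: reflexive-transitive closure of thread order together
with release–acquire edges. -/
def hb (σ : Execution) : Fin σ.n → Fin σ.n → Prop :=
  Relation.ReflTransGen σ.hbStep

/-- The (finite) set of threads of the events of `σ`. -/
def threads (σ : Execution) : Finset ℕ :=
  Finset.univ.image σ.thread

/-- Local time `Lft(e)`: 1 plus the number of release events thread-order
before `e`. -/
def Lft (σ : Execution) (e : Fin σ.n) : ℕ :=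
  (Finset.univ.filter (fun f => (σ.op f).isRel ∧ σ.sTho f e)).card + 1

/-- FastTrack timestamp `Cft(e)(t)`: max of `Lft(f)` over events `f` of
thread `t` with `f ≤HB e` (0 if there are none). -/
def Cft (σ : Execution) (e : Fin σ.n) (t : ℕ) : ℕ :=
  (Finset.univ.filter (fun f => σ.thread f = t ∧ σ.hb f e)).sup σ.Lft

/-- `T1 ⊑ T2`: pointwise comparison over the threads of `σ`. -/
def VCle (σ : Execution) (T1 T2 : ℕ → ℕ) : Prop :=
  ∀ t ∈ σ.threads, T1 t ≤ T2 t

/-- `(e1, e2)` is a conflicting pair (with `e1 <tr e2`). -/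
def Conflicting (σ : Execution) (e1 e2 : Fin σ.n) : Prop :=
  e1 < e2 ∧ σ.thread e1 ≠ σ.thread e2 ∧
    ∃ x, (σ.op e1).accesses x ∧ (σ.op e2).accesses x ∧
      (σ.op e1 = Op.write x ∨ σ.op e2 = Op.write x)

/-- `(e1, e2)` is an HB-race. -/
def HBRace (σ : Execution) (e1 e2 : Fin σ.n) : Prop :=
  σ.Conflicting e1 e2 ∧ ¬ σ.hb e1 e2

/-- `RelAfter S`: release events that are the first release after some
sampled event, in the same thread. -/
def RelAfter (σ : Execution) (S : Finset (Fin σ.n)) : Finset (Fin σ.n) :=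
  Finset.univ.filter (fun f => (σ.op f).isRel ∧
    ∃ e ∈ S, σ.sTho e f ∧
      ∀ g : Fin σ.n, (σ.op g).isRel → σ.sTho e g → ¬ σ.sTho g f)

/-- Sampling local time `Lsmp(e)`: 1 plus the number of events of `RelAfter S`
thread-order before `e`. -/
def Lsmp (σ : Execution) (S : Finset (Fin σ.n)) (e : Fin σ.n) : ℕ :=
  ((σ.RelAfter S).filter (fun f => σ.sTho f e)).card + 1

/-- Sampling timestamp `Csmp(e)(t)`: max of `Lsmp(f)` over sampled events `f`
of thread `t` with `f ≤HB e` (0 if there are none). -/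
def Csmp (σ : Execution) (S : Finset (Fin σ.n)) (e : Fin σ.n) (t : ℕ) : ℕ :=
  (S.filter (fun f => σ.thread f = t ∧ σ.hb f e)).sup (σ.Lsmp S)

/-- `Csmp⁻(f)`: the sampling timestamp of the immediate thread-order
predecessor of `f`, or the all-zero timestamp if `f` is the first event of
its thread. -/
def CsmpPrev (σ : Execution) (S : Finset (Fin σ.n)) (f : Fin σ.n) : ℕ → ℕ :=
  if h : ∃ f' : Fin σ.n, σ.sTho f' f ∧ ∀ g : Fin σ.n, σ.sTho f' g → ¬ σ.sTho g f
  then σ.Csmp S h.choose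
  else fun _ => 0

/-- `VT(e)`: total number of component updates of the sampling timestamp along
the thread of `e`, up to and including `e`. -/
def VT (σ : Execution) (S : Finset (Fin σ.n)) (e : Fin σ.n) : ℕ :=
  ∑ f ∈ Finset.univ.filter (fun f => σ.tho f e),
    ((σ.threads).filter (fun t => σ.Csmp S f t ≠ σ.CsmpPrev S f t)).card

/-- Freshness timestamp `U(e)(t)`: max of `VT(f)` over events `f` of thread
`t` with `f ≤HB e` (0 if there are none). -/
def Ufr (σ : Execution) (S : Finset (Fin σ.n)) (e : Fin σ.n) (t : ℕ) : ℕ :=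
  (Finset.univ.filter (fun f => σ.thread f = t ∧ σ.hb f e)).sup (σ.VT S)

end Execution

namespace Execution

lemma hbStep_le (σ : Execution) {a b : Fin σ.n} (h : σ.hbStep a b) : a ≤ b := by
  rcases h with ⟨h, _⟩ | ⟨h, _⟩
  · exact h
  · exact le_of_lt h

lemma hb_le (σ : Execution) {a b : Fin σ.n} (h : σ.hb a b) : a ≤ b := by
  induction h with
  | refl => exact le_refl _
  | tail _ hstep ih => exact le_trans ih (σ.hbStep_le hstep)


lemma Lft_mono (σ : Execution) {a b : Fin σ.n} (h : σ.tho a b) :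
    σ.Lft a ≤ σ.Lft b := by
  unfold Execution.Lft
  have : (Finset.univ.filter (fun f => (σ.op f).isRel ∧ σ.sTho f a)) ⊆
      (Finset.univ.filter (fun f => (σ.op f).isRel ∧ σ.sTho f b)) := by
    intro g hg
    simp only [Finset.mem_filter, Finset.mem_univ, true_and] at hg ⊢
    exact ⟨hg.1, lt_of_lt_of_le hg.2.1 h.1, hg.2.2.trans h.2⟩
  exact Nat.add_le_add_right (Finset.card_le_card this) 1

lemma Cft_self (σ : Execution) (e : Fin σ.n) :
    σ.Cft e (σ.thread e) = σ.Lft e := by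
  apply le_antisymm
  · apply Finset.sup_le
    intro f hf
    simp only [Finset.mem_filter, Finset.mem_univ, true_and] at hf
    exact σ.Lft_mono ⟨σ.hb_le hf.2, hf.1⟩
  · exact Finset.le_sup (Finset.mem_filter.mpr
      ⟨Finset.mem_univ _, rfl, Relation.ReflTransGen.refl⟩)

lemma escape (σ : Execution) {f e2 : Fin σ.n} (h : σ.hb f e2)
    (hne : σ.thread f ≠ σ.thread e2) :
    ∃ r, (σ.op r).isRel ∧ σ.tho f r ∧ σ.hb r e2 := by
  induction h using Relation.ReflTransGen.head_induction_on with
  | refl => exact absurd rfl hne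
  | head hstep htail ih =>
    rename_i a c
    rcases hstep with ⟨hle, hth⟩ | ⟨hlt, l, hrel, hacq⟩
    · obtain ⟨r, hr, ⟨hcr, hthr⟩, hrhb⟩ := ih (hth ▸ hne)
      exact ⟨r, hr, ⟨hle.trans hcr, hth.trans hthr⟩, hrhb⟩
    · exact ⟨a, ⟨l, hrel⟩, ⟨le_refl _, rfl⟩,
        Relation.ReflTransGen.head (Or.inr ⟨hlt, l, hrel, hacq⟩) htail⟩

lemma hb_imp_VCle (σ : Execution) {e1 e2 : Fin σ.n} (h : σ.hb e1 e2) :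
    σ.VCle (σ.Cft e1) (σ.Cft e2) := by
  intro t _
  apply Finset.sup_le
  intro f hf
  simp only [Finset.mem_filter, Finset.mem_univ, true_and] at hf
  exact Finset.le_sup (by
    simp only [Finset.mem_filter, Finset.mem_univ, true_and]
    exact ⟨hf.1, hf.2.trans h⟩)

lemma comp_imp_hb (σ : Execution) {e1 e2 : Fin σ.n}
    (hne : σ.thread e1 ≠ σ.thread e2)
    (h : σ.Cft e1 (σ.thread e1) ≤ σ.Cft e2 (σ.thread e1)) : σ.hb e1 e2 := by
  rw [σ.Cft_self e1] at h
  set s := Finset.univ.filter (fun f => σ.thread f = σ.thread e1 ∧ σ.hb f e2)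
    with hs
  have hsne : s.Nonempty := by
    by_contra hc
    rw [Finset.not_nonempty_iff_eq_empty] at hc
    have h0 : σ.Cft e2 (σ.thread e1) = 0 := by
      unfold Execution.Cft
      rw [← hs, hc]
      rfl
    rw [h0] at h
    unfold Execution.Lft at h
    omega
  obtain ⟨f, hfmem, hfsup⟩ := Finset.exists_mem_eq_sup s hsne σ.Lft
  have hf : σ.thread f = σ.thread e1 ∧ σ.hb f e2 := by
    simpa [hs] using hfmem
  have hLf : σ.Lft e1 ≤ σ.Lft f := by
    unfold Execution.Cft at h
    rw [← hs] at h
    omega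
  rcases le_or_gt e1 f with hle | hlt
  · exact Relation.ReflTransGen.head (Or.inl ⟨hle, hf.1.symm⟩) hf.2
  · -- f < e1, same thread
    have hLf' : σ.Lft f = σ.Lft e1 :=
      le_antisymm (σ.Lft_mono ⟨le_of_lt hlt, hf.1⟩) hLf
    have hsets : (Finset.univ.filter (fun g => (σ.op g).isRel ∧ σ.sTho g e1)) =
        (Finset.univ.filter (fun g => (σ.op g).isRel ∧ σ.sTho g f)) := by
      symm
      apply Finset.eq_of_subset_of_card_le
      · intro g hg
        simp only [Finset.mem_filter, Finset.mem_univ, true_and] at hg ⊢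
        exact ⟨hg.1, lt_trans hg.2.1 hlt, hg.2.2.trans hf.1⟩
      · unfold Execution.Lft at hLf'
        omega
    have hfe2 : σ.thread f ≠ σ.thread e2 := hf.1 ▸ hne
    obtain ⟨r, hrrel, ⟨hfr, hthr⟩, hrhb⟩ := σ.escape hf.2 hfe2
    have hre1 : e1 ≤ r := by
      by_contra hc
      push_neg at hc
      have : r ∈ Finset.univ.filter (fun g => (σ.op g).isRel ∧ σ.sTho g e1) := by
        simp only [Finset.mem_filter, Finset.mem_univ, true_and]
        exact ⟨hrrel, hc, hthr.symm.trans hf.1⟩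
      rw [hsets] at this
      simp only [Finset.mem_filter, Finset.mem_univ, true_and] at this
      exact absurd this.2.1 (not_lt.mpr hfr)
    exact Relation.ReflTransGen.head
      (Or.inl ⟨hre1, (hthr.symm.trans hf.1).symm⟩) hrhb

end Execution

/-- For a lock-well-formed execution and events `e1, e2` of
different threads, the three conditions
(i) `Cft(e1)(ThreadOf e1) ≤ Cft(e2)(ThreadOf e1)`,
(ii) `Cft(e1) ⊑ Cft(e2)`, and (iii) `e1 ≤HB e2` are equivalent. -/
theorem stmt0 (σ : Execution) (hwf : σ.LockWellFormed)
    (e1 e2 : Fin σ.n) (hne : σ.thread e1 ≠ σ.thread e2) :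
    (σ.Cft e1 (σ.thread e1) ≤ σ.Cft e2 (σ.thread e1) ↔
       σ.VCle (σ.Cft e1) (σ.Cft e2)) ∧
    (σ.VCle (σ.Cft e1) (σ.Cft e2) ↔ σ.hb e1 e2) := by
  have ht1 : σ.thread e1 ∈ σ.threads :=
    Finset.mem_image.mpr ⟨e1, Finset.mem_univ _, rfl⟩
  refine ⟨⟨fun h => σ.hb_imp_VCle (σ.comp_imp_hb hne h), fun h => h _ ht1⟩,
    ⟨fun h => σ.comp_imp_hb hne (h _ ht1), σ.hb_imp_VCle⟩⟩
end
end

section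
/- Let σ be an execution and let e1, e2 be events of σ with ThreadOf(e1) ≠ ThreadOf(e2) and e1 ≤HB e2. Then there exist a lock ℓ, a release event f of ℓ, and an acquire event g of ℓ such that e1 ≤tho f, f <tr g, and g ≤HB e2. -/
open scoped Classical

noncomputable section

/-- If `e1 ≤HB e2` and the two events are on different threads,
then there are a lock `l`, a release `f` of `l` and an acquire `g` of `l`
with `e1 ≤tho f`, `f <tr g` and `g ≤HB e2`. -/
theorem stmt3 (σ : Execution) (e1 e2 : Fin σ.n)
    (hne : σ.thread e1 ≠ σ.thread e2) (hhb : σ.hb e1 e2) :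
    ∃ (l : ℕ) (f g : Fin σ.n), σ.op f = Op.rel l ∧ σ.op g = Op.acq l ∧
      σ.tho e1 f ∧ f < g ∧ σ.hb g e2 := by
  induction hhb using Relation.ReflTransGen.head_induction_on with
  | refl => exact absurd rfl hne
  | head hstep hrest ih =>
    rename_i a c
    rcases hstep with ⟨hle, hth⟩ | ⟨hlt, l, hrel, hacq⟩
    · by_cases hc : σ.thread c = σ.thread e2
      · exact absurd (hth.trans hc) hne
      · obtain ⟨l, f, g, h1, h2, ⟨h3, h4⟩, h5, h6⟩ := ih hc
        exact ⟨l, f, g, h1, h2, ⟨hle.trans h3, hth.trans h4⟩, h5, h6⟩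
    · exact ⟨l, a, c, hrel, hacq, ⟨le_refl _, rfl⟩, hlt, hrest⟩
end
end

section
/- Let σ be a lock-well-formed execution and let e1, e2 be events of σ with ThreadOf(e1) = ThreadOf(e2) = t and Lft(e1) = Lft(e2). Then for every event e of σ with ThreadOf(e) ≠ t: e1 ≤HB e if and only if e2 ≤HB e. -/
open scoped Classical

noncomputable section

lemma exists_rel_of_hb (σ : Execution) {a e : Fin σ.n} (h : σ.hb a e) :
    σ.thread e ≠ σ.thread a →
    ∃ f, (σ.op f).isRel ∧ σ.tho a f ∧ σ.hb f e := by
  induction h using Relation.ReflTransGen.head_induction_on with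
  | refl => intro h; exact absurd rfl h
  | head hstep htail ih =>
    intro hne
    rcases hstep with ⟨hle, hth⟩ | ⟨hlt, l, hrel, hacq⟩
    · rcases ih (fun hh => hne (hh.trans hth.symm)) with ⟨f, hf, ⟨hbf, hthf⟩, hhb⟩
      exact ⟨f, hf, ⟨hle.trans hbf, hth.trans hthf⟩, hhb⟩
    · refine ⟨_, ⟨l, hrel⟩, ⟨le_refl _, rfl⟩,
        Relation.ReflTransGen.head (Or.inr ⟨hlt, l, hrel, hacq⟩) htail⟩

lemma no_rel_between (σ : Execution) {e1 e2 : Fin σ.n}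
    (hth : σ.thread e1 = σ.thread e2) (hle : e1 ≤ e2)
    (hl : σ.Lft e1 = σ.Lft e2) :
    ∀ f : Fin σ.n, (σ.op f).isRel → σ.tho e1 f → ¬ σ.sTho f e2 := by
  intro f hf ⟨hef, hthef⟩ hfe2
  have hsub : (Finset.univ.filter (fun g => (σ.op g).isRel ∧ σ.sTho g e1)) ⊆
      (Finset.univ.filter (fun g => (σ.op g).isRel ∧ σ.sTho g e2)) := by
    intro g hg
    simp only [Finset.mem_filter, Finset.mem_univ, true_and] at hg ⊢
    exact ⟨hg.1, lt_of_lt_of_le hg.2.1 hle, hg.2.2.trans hth⟩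
  have hcard : (Finset.univ.filter (fun g => (σ.op g).isRel ∧ σ.sTho g e1)).card =
      (Finset.univ.filter (fun g => (σ.op g).isRel ∧ σ.sTho g e2)).card := by
    have := hl
    unfold Execution.Lft at this
    omega
  have heq := Finset.eq_of_subset_of_card_le hsub (le_of_eq hcard.symm)
  have hmem : f ∈ (Finset.univ.filter (fun g => (σ.op g).isRel ∧ σ.sTho g e2)) := by
    simp only [Finset.mem_filter, Finset.mem_univ, true_and]
    exact ⟨hf, hfe2⟩
  rw [← heq] at hmem
  simp only [Finset.mem_filter, Finset.mem_univ, true_and] at hmem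
  exact absurd hmem.2.1 (not_lt.mpr hef)

lemma key_dir (σ : Execution) {e1 e2 : Fin σ.n}
    (hth : σ.thread e1 = σ.thread e2) (hle : e1 ≤ e2)
    (hl : σ.Lft e1 = σ.Lft e2) :
    ∀ e : Fin σ.n, σ.thread e ≠ σ.thread e1 → σ.hb e1 e → σ.hb e2 e := by
  intro e hne h
  rcases exists_rel_of_hb σ h hne with ⟨f, hf, htho, hhb⟩
  have hnst := no_rel_between σ hth hle hl f hf htho
  have hthf : σ.thread f = σ.thread e2 := by
    rw [← htho.2, hth]
  have he2f : e2 ≤ f := by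
    by_contra hcon
    exact hnst ⟨not_le.mp hcon, hthf⟩
  exact Relation.ReflTransGen.head (Or.inl ⟨he2f, hthf.symm⟩) hhb

/-- In a lock-well-formed execution, two events of the same
thread `t` with equal local times are HB-equivalent from the viewpoint of
every event of a different thread. -/
theorem stmt4 (σ : Execution) (hwf : σ.LockWellFormed)
    (e1 e2 : Fin σ.n) (t : ℕ)
    (h1 : σ.thread e1 = t) (h2 : σ.thread e2 = t)
    (hl : σ.Lft e1 = σ.Lft e2) :
    ∀ e : Fin σ.n, σ.thread e ≠ t → (σ.hb e1 e ↔ σ.hb e2 e) := by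
  intro e he
  have hth : σ.thread e1 = σ.thread e2 := h1.trans h2.symm
  rcases le_total e1 e2 with hle | hle
  · constructor
    · exact key_dir σ hth hle hl e (h1 ▸ he)
    · intro h
      exact Relation.ReflTransGen.head (Or.inl ⟨hle, hth⟩) h
  · constructor
    · intro h
      exact Relation.ReflTransGen.head (Or.inl ⟨hle, hth.symm⟩) h
    · exact key_dir σ hth.symm hle hl.symm e (h2 ▸ he)
end
end

section
/- Let σ be a lock-well-formed execution, let S be a set of read/write events of σ, let e1 ∈ S, and let e2 be an event of σ with ThreadOf(e1) ≠ ThreadOf(e2). Then the following three statements are equivalent: (i) Csmp(e1)(ThreadOf(e1)) ≤ Csmp(e2)(ThreadOf(e1)); (ii) Csmp(e1) ⊑ Csmp(e2); (iii) e1 ≤HB e2. -/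
open scoped Classical

noncomputable section

private lemma hb_le (σ : Execution) {f e : Fin σ.n} (h : σ.hb f e) : f ≤ e := by
  induction h with
  | refl => exact le_refl _
  | tail _ step ih =>
    rcases step with ⟨hle, _⟩ | ⟨hlt, _⟩
    · exact le_trans ih hle
    · exact le_trans ih hlt.le

private lemma lsmp_mono (σ : Execution) (S : Finset (Fin σ.n)) {f e : Fin σ.n}
    (h : σ.tho f e) : σ.Lsmp S f ≤ σ.Lsmp S e := by
  unfold Execution.Lsmp
  apply Nat.add_le_add_right
  apply Finset.card_le_card
  intro g hg
  simp only [Finset.mem_filter] at hg ⊢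
  exact ⟨hg.1, lt_of_lt_of_le hg.2.1 h.1, hg.2.2.trans h.2⟩

private lemma csmp_self (σ : Execution) (S : Finset (Fin σ.n)) {e : Fin σ.n}
    (he : e ∈ S) : σ.Csmp S e (σ.thread e) = σ.Lsmp S e := by
  apply le_antisymm
  · apply Finset.sup_le
    intro f hf
    simp only [Finset.mem_filter] at hf
    exact lsmp_mono σ S ⟨hb_le σ hf.2.2, hf.2.1⟩
  · exact Finset.le_sup (Finset.mem_filter.mpr ⟨he, rfl, Relation.ReflTransGen.refl⟩)

private lemma escape (σ : Execution) {f e2 : Fin σ.n} (h : σ.hb f e2) :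
    σ.thread f ≠ σ.thread e2 → ∃ r, σ.tho f r ∧ (σ.op r).isRel ∧ σ.hb r e2 := by
  induction h using Relation.ReflTransGen.head_induction_on with
  | refl => exact fun hne => absurd rfl hne
  | head step rest ih =>
    rename_i a c
    intro hne
    rcases step with ⟨hle, hth⟩ | ⟨hlt, l, hrel, hacq⟩
    · obtain ⟨r, hr1, hr2, hr3⟩ := ih (hth ▸ hne)
      exact ⟨r, ⟨le_trans hle hr1.1, hth.trans hr1.2⟩, hr2, hr3⟩
    · exact ⟨a, ⟨le_refl _, rfl⟩, ⟨l, hrel⟩,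
        Relation.ReflTransGen.head (Or.inr ⟨hlt, l, hrel, hacq⟩) rest⟩


/-- For a lock-well-formed execution, a set `S` of read/write
events, `e1 ∈ S` and an event `e2` of a different thread, the conditions
(i) `Csmp(e1)(ThreadOf e1) ≤ Csmp(e2)(ThreadOf e1)`,
(ii) `Csmp(e1) ⊑ Csmp(e2)`, and (iii) `e1 ≤HB e2` are equivalent. -/
theorem stmt7 (σ : Execution) (hwf : σ.LockWellFormed)
    (S : Finset (Fin σ.n)) (hS : ∀ e ∈ S, (σ.op e).isAccess)
    (e1 e2 : Fin σ.n) (he1 : e1 ∈ S) (hne : σ.thread e1 ≠ σ.thread e2) :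
    (σ.Csmp S e1 (σ.thread e1) ≤ σ.Csmp S e2 (σ.thread e1) ↔
       σ.VCle (σ.Csmp S e1) (σ.Csmp S e2)) ∧
    (σ.VCle (σ.Csmp S e1) (σ.Csmp S e2) ↔ σ.hb e1 e2) := by
  have h13 : σ.Csmp S e1 (σ.thread e1) ≤ σ.Csmp S e2 (σ.thread e1) → σ.hb e1 e2 := by
    intro hi
    rw [csmp_self σ S he1] at hi
    have hpos : (⊥ : ℕ) < σ.Lsmp S e1 := Nat.succ_pos _
    obtain ⟨f, hfmem, hle⟩ := (Finset.le_sup_iff hpos).mp hi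
    simp only [Finset.mem_filter] at hfmem
    obtain ⟨hfS, hfth, hfhb⟩ := hfmem
    rcases le_or_gt e1 f with hef | hfe
    · exact Relation.ReflTransGen.trans
        (Relation.ReflTransGen.single (Or.inl ⟨hef, hfth.symm⟩)) hfhb
    · by_cases hrel : ∃ g : Fin σ.n, (σ.op g).isRel ∧ σ.sTho f g ∧ g < e1
      · exfalso
        obtain ⟨g, hgrel, hgstho, hglt⟩ := hrel
        set R := Finset.univ.filter (fun g => (σ.op g).isRel ∧ σ.sTho f g) with hR
        have hgR : g ∈ R := Finset.mem_filter.mpr ⟨Finset.mem_univ _, hgrel, hgstho⟩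
        have hRne : R.Nonempty := ⟨g, hgR⟩
        set g0 := R.min' hRne with hg0
        have hg0R : g0 ∈ R := R.min'_mem hRne
        simp only [hR, Finset.mem_filter] at hg0R
        obtain ⟨-, hg0rel, hg0stho⟩ := hg0R
        have hg0lt : g0 < e1 := lt_of_le_of_lt (R.min'_le g hgR) hglt
        have hg0mem : g0 ∈ σ.RelAfter S := by
          refine Finset.mem_filter.mpr ⟨Finset.mem_univ _, hg0rel, f, hfS, hg0stho, ?_⟩
          intro g' hg'rel hg'stho hcon
          exact absurd hcon.1 (not_lt.mpr (R.min'_le g' (Finset.mem_filter.mpr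
            ⟨Finset.mem_univ _, hg'rel, hg'stho⟩)))
        have hcard : ((σ.RelAfter S).filter (fun h => σ.sTho h f)).card <
            ((σ.RelAfter S).filter (fun h => σ.sTho h e1)).card := by
          apply Finset.card_lt_card
          constructor
          · intro h hh
            simp only [Finset.mem_filter] at hh ⊢
            exact ⟨hh.1, lt_trans hh.2.1 hfe, hh.2.2.trans hfth⟩
          · intro hcon
            have h1 : g0 ∈ (σ.RelAfter S).filter (fun h => σ.sTho h e1) :=
              Finset.mem_filter.mpr ⟨hg0mem, hg0lt, hg0stho.2.symm.trans hfth⟩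
            have h2 := hcon h1
            simp only [Finset.mem_filter] at h2
            exact absurd h2.2.1 (not_lt.mpr hg0stho.1.le)
        have : σ.Lsmp S f < σ.Lsmp S e1 := Nat.add_lt_add_right hcard 1
        omega
      · push_neg at hrel
        obtain ⟨r, htho, hrrel, hrhb⟩ := escape σ hfhb (hfth ▸ hne)
        have hfr : f ≠ r := by
          intro h
          obtain ⟨x, hx⟩ := hS f hfS
          obtain ⟨l, hl⟩ := hrrel
          subst h
          rcases hx with h | h <;> rw [h] at hl <;> exact Op.noConfusion hl
        have hflt : f < r := lt_of_le_of_ne htho.1 hfr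
        have hre1 : e1 ≤ r := hrel r hrrel ⟨hflt, htho.2⟩
        exact Relation.ReflTransGen.trans
          (Relation.ReflTransGen.single (Or.inl ⟨hre1, hfth.symm.trans htho.2⟩)) hrhb
  have h32 : σ.hb e1 e2 → σ.VCle (σ.Csmp S e1) (σ.Csmp S e2) := by
    intro h t _
    apply Finset.sup_mono
    intro f hf
    simp only [Finset.mem_filter] at hf ⊢
    exact ⟨hf.1, hf.2.1, hf.2.2.trans h⟩
  have h21 : σ.VCle (σ.Csmp S e1) (σ.Csmp S e2) →
      σ.Csmp S e1 (σ.thread e1) ≤ σ.Csmp S e2 (σ.thread e1) := fun h =>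
    h (σ.thread e1) (Finset.mem_image.mpr ⟨e1, Finset.mem_univ _, rfl⟩)
  exact ⟨⟨fun hi => h32 (h13 hi), h21⟩, ⟨fun hii => h13 (h21 hii), h32⟩⟩
end
end

section
/- Let σ be a lock-well-formed execution and S a set of read/write events of σ. For every event e ∈ S, Csmp(e)(ThreadOf(e)) = Lsmp(e). -/
open scoped Classical

noncomputable section

/-- For every sampled event `e ∈ S`,
`Csmp(e)(ThreadOf e) = Lsmp(e)`. -/
theorem stmt8 (σ : Execution) (hwf : σ.LockWellFormed)
    (S : Finset (Fin σ.n)) (hS : ∀ e ∈ S, (σ.op e).isAccess) :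
    ∀ e ∈ S, σ.Csmp S e (σ.thread e) = σ.Lsmp S e := by
  intro e he
  have hb_le : ∀ f g : Fin σ.n, σ.hb f g → f ≤ g := by
    intro f g h
    induction h with
    | refl => exact le_refl _
    | tail _ hstep ih =>
        rcases hstep with ⟨hle, _⟩ | ⟨hlt, _⟩
        · exact le_trans ih hle
        · exact le_trans ih (le_of_lt hlt)
  apply le_antisymm
  · apply Finset.sup_le
    intro f hf
    rw [Finset.mem_filter] at hf
    obtain ⟨hfS, ht, hhb⟩ := hf
    have hle : f ≤ e := hb_le f e hhb
    unfold Execution.Lsmp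
    apply Nat.add_le_add_right
    apply Finset.card_le_card
    intro g hg
    rw [Finset.mem_filter] at hg ⊢
    obtain ⟨hg1, hg2, hg3⟩ := hg
    exact ⟨hg1, lt_of_lt_of_le hg2 hle, hg3.trans ht⟩
  · exact Finset.le_sup (by rw [Finset.mem_filter]; exact ⟨he, rfl, Relation.ReflTransGen.refl⟩)
end
end

section
/- Let σ be a lock-well-formed execution, S a set of read/write events of σ, and e1, e2 ∈ S with ThreadOf(e1) = ThreadOf(e2) = t and Lsmp(e1) = Lsmp(e2). Then for every event e of σ with ThreadOf(e) ≠ t: e1 ≤HB e if and only if e2 ≤HB e. -/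
open scoped Classical

noncomputable section

/-- If `a ≤HB e` and `e` is in a different thread, then the HB path leaves the
thread of `a` through a release–acquire edge whose release is thread-after `a`. -/
lemma hb_cross (σ : Execution) {a e : Fin σ.n} (h : σ.hb a e)
    (hne : σ.thread e ≠ σ.thread a) :
    ∃ f g : Fin σ.n, σ.tho a f ∧ f < g ∧
      (∃ l, σ.op f = Op.rel l ∧ σ.op g = Op.acq l) ∧ σ.hb g e := by
  induction h using Relation.ReflTransGen.head_induction_on with
  | refl => exact absurd rfl hne
  | head hstep hrest ih =>
    rename_i a' b
    cases hstep with
    | inl hth =>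
      obtain ⟨f, g, hbf, rest⟩ := ih (fun hc => hne (hc.trans hth.2.symm))
      exact ⟨f, g, ⟨le_trans hth.1 hbf.1, hth.2.trans hbf.2⟩, rest⟩
    | inr hra =>
      exact ⟨a', b, ⟨le_refl _, rfl⟩, hra.1, hra.2, hrest⟩

lemma key (σ : Execution) (S : Finset (Fin σ.n)) (hS : ∀ e ∈ S, (σ.op e).isAccess)
    (e1 e2 : Fin σ.n) (he1 : e1 ∈ S) (t : ℕ)
    (h1 : σ.thread e1 = t) (h2 : σ.thread e2 = t) (h12 : e1 ≤ e2)
    (hl : σ.Lsmp S e1 = σ.Lsmp S e2)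
    (e : Fin σ.n) (hne : σ.thread e ≠ t) (h : σ.hb e1 e) : σ.hb e2 e := by
  obtain ⟨f, g, hf, hfg, ⟨l, hrel, hacq⟩, hge⟩ := hb_cross σ h (by rw [h1]; exact hne)
  have hne1f : e1 ≠ f := by
    intro heq
    obtain ⟨x, hx⟩ := hS e1 he1
    rw [heq, hrel] at hx
    rcases hx with h | h <;> simp at h
  have he1f : σ.sTho e1 f := ⟨lt_of_le_of_ne hf.1 hne1f, hf.2⟩
  set T := Finset.univ.filter (fun g => (σ.op g).isRel ∧ σ.sTho e1 g) with hT
  have hfT : f ∈ T := by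
    simp only [hT, Finset.mem_filter, Finset.mem_univ, true_and]
    exact ⟨⟨l, hrel⟩, he1f⟩
  have hTne : T.Nonempty := ⟨f, hfT⟩
  set f0 := T.min' hTne with hf0def
  have hf0T : f0 ∈ T := T.min'_mem hTne
  rw [hT, Finset.mem_filter] at hf0T
  obtain ⟨-, hf0rel, hf0s⟩ := hf0T
  have hf0min : ∀ g ∈ T, f0 ≤ g := fun g hg => T.min'_le g hg
  have hf0RA : f0 ∈ σ.RelAfter S := by
    rw [Execution.RelAfter, Finset.mem_filter]
    refine ⟨Finset.mem_univ _, hf0rel, e1, he1, hf0s, ?_⟩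
    intro g hgrel hg hgf0
    have : f0 ≤ g := hf0min g (by
      simp only [hT, Finset.mem_filter, Finset.mem_univ, true_and]
      exact ⟨hgrel, hg⟩)
    exact absurd hgf0.1 (not_lt.mpr this)
  have hns : ¬ σ.sTho f0 e2 := by
    intro hs
    have hsub : (σ.RelAfter S).filter (fun f => σ.sTho f e1) ⊂
        (σ.RelAfter S).filter (fun f => σ.sTho f e2) := by
      constructor
      · intro g hg
        rw [Finset.mem_filter] at hg ⊢
        exact ⟨hg.1, lt_of_lt_of_le hg.2.1 h12, hg.2.2.trans (h1.trans h2.symm)⟩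
      · intro hsub'
        have hmem : f0 ∈ (σ.RelAfter S).filter (fun f => σ.sTho f e2) :=
          Finset.mem_filter.mpr ⟨hf0RA, hs⟩
        have := Finset.mem_filter.mp (hsub' hmem)
        exact absurd this.2.1 (not_lt.mpr (le_of_lt hf0s.1))
    have := Finset.card_lt_card hsub
    unfold Execution.Lsmp at hl
    omega
  have hthf0 : σ.thread e2 = σ.thread f0 := (h2.trans h1.symm).trans hf0s.2
  have he2f0 : e2 ≤ f0 := by
    by_contra hlt
    exact hns ⟨lt_of_not_ge hlt, hthf0.symm⟩
  have hf0f : f0 ≤ f := hf0min f hfT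
  have hthf : σ.thread f0 = σ.thread f := hf0s.2.symm.trans hf.2
  exact Relation.ReflTransGen.head (Or.inl ⟨he2f0, hthf0⟩)
    (Relation.ReflTransGen.head (Or.inl ⟨hf0f, hthf⟩)
      (Relation.ReflTransGen.head (Or.inr ⟨hfg, l, hrel, hacq⟩) hge))

/-- Two sampled events of the same thread `t` with equal
sampling local times are HB-equivalent from the viewpoint of every event of
a different thread. -/
theorem stmt10 (σ : Execution) (hwf : σ.LockWellFormed)
    (S : Finset (Fin σ.n)) (hS : ∀ e ∈ S, (σ.op e).isAccess)
    (e1 e2 : Fin σ.n) (he1 : e1 ∈ S) (he2 : e2 ∈ S) (t : ℕ)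
    (h1 : σ.thread e1 = t) (h2 : σ.thread e2 = t)
    (hl : σ.Lsmp S e1 = σ.Lsmp S e2) :
    ∀ e : Fin σ.n, σ.thread e ≠ t → (σ.hb e1 e ↔ σ.hb e2 e) := by
  intro e hne
  rcases le_total e1 e2 with h | h
  · constructor
    · exact fun hh => key σ S hS e1 e2 he1 t h1 h2 h hl e hne hh
    · exact fun hh => Relation.ReflTransGen.head (Or.inl ⟨h, h1.trans h2.symm⟩) hh
  · constructor
    · exact fun hh => Relation.ReflTransGen.head (Or.inl ⟨h, h2.trans h1.symm⟩) hh
    · exact fun hh => key σ S hS e2 e1 he2 t h2 h1 h hl.symm e hne hh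
end
end

section
/- Let σ be a lock-well-formed execution and S a finite set of read/write events of σ. Then for every event e of σ, the sum over all threads t ∈ Threads(σ) of Csmp(e)(t) is at most |S|. -/
/-!
Every release in `RelAfter S` is the first release following some sampled event of its thread,
and two releases cannot be first after the same event. So for a sampled `f` the releases of
`RelAfter S` before `f` inject into the sampled events before `f` in its thread, i.e.
`Lsmp(f)` is at most the number of sampled events of that thread. Hence `Csmp(e)(t)` is bounded
by the number of sampled events of thread `t`, and summing over threads gives `|S|`.
-/

open scoped Classical

noncomputable section

namespace Execution

variable (σ : Execution)

def IsFirstRelAfter (e g : Fin σ.n) : Prop :=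
  σ.sTho e g ∧ ∀ g' : Fin σ.n, (σ.op g').isRel → σ.sTho e g' → ¬ σ.sTho g' g

theorem mem_relAfter {S : Finset (Fin σ.n)} {g : Fin σ.n} :
    g ∈ σ.RelAfter S ↔ (σ.op g).isRel ∧ ∃ e ∈ S, σ.IsFirstRelAfter e g := by
  simp [RelAfter, IsFirstRelAfter]

variable {σ}

theorem IsFirstRelAfter.eq {e g₁ g₂ : Fin σ.n} (hrel₁ : (σ.op g₁).isRel)
    (hrel₂ : (σ.op g₂).isRel) (h₁ : σ.IsFirstRelAfter e g₁) (h₂ : σ.IsFirstRelAfter e g₂) :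
    g₁ = g₂ := by
  have hthread : σ.thread g₁ = σ.thread g₂ := h₁.1.2.symm.trans h₂.1.2
  rcases lt_trichotomy g₁ g₂ with hlt | heq | hgt
  · exact absurd ⟨hlt, hthread⟩ (h₂.2 g₁ hrel₁ h₁.1)
  · exact heq
  · exact absurd ⟨hgt, hthread.symm⟩ (h₁.2 g₂ hrel₂ h₂.1)

theorem card_relAfter_sTho_le (S : Finset (Fin σ.n)) (f : Fin σ.n) :
    ((σ.RelAfter S).filter (σ.sTho · f)).card ≤ (S.filter (σ.sTho · f)).card := by
  refine Finset.card_le_card_of_forall_subsingleton (fun g e => σ.IsFirstRelAfter e g) ?_ ?_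
  · intro g hg
    obtain ⟨hgS, hgf⟩ := Finset.mem_filter.mp hg
    obtain ⟨-, e, heS, he⟩ := σ.mem_relAfter.mp hgS
    exact ⟨e, Finset.mem_filter.mpr ⟨heS, he.1.1.trans hgf.1, he.1.2.trans hgf.2⟩, he⟩
  · rintro e - g₁ ⟨hg₁, he₁⟩ g₂ ⟨hg₂, he₂⟩
    exact IsFirstRelAfter.eq (σ.mem_relAfter.mp (Finset.mem_filter.mp hg₁).1).1
      (σ.mem_relAfter.mp (Finset.mem_filter.mp hg₂).1).1 he₁ he₂

theorem lsmp_le_card_sampled_of_thread {S : Finset (Fin σ.n)} {f : Fin σ.n} (hf : f ∈ S) :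
    σ.Lsmp S f ≤ (S.filter (σ.thread · = σ.thread f)).card := by
  have hsub : insert f (S.filter (σ.sTho · f)) ⊆ S.filter (σ.thread · = σ.thread f) := by
    intro x hx
    rcases Finset.mem_insert.mp hx with rfl | hx
    · exact Finset.mem_filter.mpr ⟨hf, rfl⟩
    · exact Finset.mem_filter.mpr ⟨(Finset.mem_filter.mp hx).1, (Finset.mem_filter.mp hx).2.2⟩
  have hnotMem : f ∉ S.filter (σ.sTho · f) := fun h => lt_irrefl f (Finset.mem_filter.mp h).2.1
  calc σ.Lsmp S f ≤ (S.filter (σ.sTho · f)).card + 1 :=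
        Nat.add_le_add_right (card_relAfter_sTho_le S f) 1
    _ = (insert f (S.filter (σ.sTho · f))).card := (Finset.card_insert_of_notMem hnotMem).symm
    _ ≤ _ := Finset.card_le_card hsub

theorem csmp_le_card_sampled_of_thread (S : Finset (Fin σ.n)) (e : Fin σ.n) (t : ℕ) :
    σ.Csmp S e t ≤ (S.filter (σ.thread · = t)).card := by
  refine Finset.sup_le fun f hf => ?_
  obtain ⟨hfS, rfl, -⟩ := Finset.mem_filter.mp hf
  exact lsmp_le_card_sampled_of_thread hfS

end Execution

theorem stmt12_general (σ : Execution)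
    (S : Finset (Fin σ.n)) :
    ∀ e : Fin σ.n, (∑ t ∈ σ.threads, σ.Csmp S e t) ≤ S.card := by
  intro e
  calc ∑ t ∈ σ.threads, σ.Csmp S e t
      ≤ ∑ t ∈ σ.threads, (S.filter (σ.thread · = t)).card :=
        Finset.sum_le_sum fun t _ => σ.csmp_le_card_sampled_of_thread S e t
    _ = S.card :=
        (Finset.card_eq_sum_card_fiberwise fun x _ =>
          Finset.mem_image_of_mem σ.thread (Finset.mem_univ x)).symm

/-- For every event `e`, the sum of the components of the
sampling timestamp of `e` over the threads of `σ` is at most `|S|`. -/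
theorem stmt12 (σ : Execution) (hwf : σ.LockWellFormed)
    (S : Finset (Fin σ.n)) (hS : ∀ e ∈ S, (σ.op e).isAccess) :
    ∀ e : Fin σ.n, (∑ t ∈ σ.threads, σ.Csmp S e t) ≤ S.card :=
  stmt12_general σ S
end
end

section
/- Let σ be a lock-well-formed execution, S a set of read/write events of σ, and (e1, e2) a conflicting pair with e1 <tr e2 and e1 ∈ S. Then (e1, e2) is an HB-race if and only if Csmp(e1)(ThreadOf(e1)) > Csmp(e2)(ThreadOf(e1)). -/
open scoped Classical

noncomputable section

namespace Execution

lemma tho_refl' (σ : Execution) (e : Fin σ.n) : σ.tho e e := ⟨le_refl _, rfl⟩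

lemma tho_trans' (σ : Execution) {a b c : Fin σ.n} (h1 : σ.tho a b) (h2 : σ.tho b c) :
    σ.tho a c := ⟨h1.1.trans h2.1, h1.2.trans h2.2⟩

lemma hb_of_tho' (σ : Execution) {a b : Fin σ.n} (h : σ.tho a b) : σ.hb a b :=
  Relation.ReflTransGen.single (Or.inl h)

lemma hb_exit (σ : Execution) {f e : Fin σ.n} (h : σ.hb f e) :
    σ.tho f e ∨ ∃ r, σ.tho f r ∧ (σ.op r).isRel ∧ σ.hb r e := by
  induction h using Relation.ReflTransGen.head_induction_on with
  | refl => exact Or.inl (σ.tho_refl' _)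
  | head hstep hrest ih =>
    rcases hstep with htho | ⟨hlt, l, hrel, hacq⟩
    · rcases ih with h1 | ⟨r, hr1, hr2, hr3⟩
      · exact Or.inl (σ.tho_trans' htho h1)
      · exact Or.inr ⟨r, σ.tho_trans' htho hr1, hr2, hr3⟩
    · exact Or.inr ⟨_, σ.tho_refl' _, ⟨l, hrel⟩,
        Relation.ReflTransGen.head (Or.inr ⟨hlt, l, hrel, hacq⟩) hrest⟩

end Execution

/-- For a conflicting pair `(e1, e2)` with `e1 <tr e2` and
`e1 ∈ S`, the pair is an HB-race iff
`Csmp(e1)(ThreadOf e1) > Csmp(e2)(ThreadOf e1)`. -/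
theorem stmt13 (σ : Execution) (hwf : σ.LockWellFormed)
    (S : Finset (Fin σ.n)) (hS : ∀ e ∈ S, (σ.op e).isAccess)
    (e1 e2 : Fin σ.n) (he1 : e1 ∈ S) (hconf : σ.Conflicting e1 e2) :
    σ.HBRace e1 e2 ↔
      σ.Csmp S e2 (σ.thread e1) < σ.Csmp S e1 (σ.thread e1) := by
  set t := σ.thread e1 with ht
  constructor
  · rintro ⟨-, hnhb⟩
    have hLe1 : σ.Lsmp S e1 ≤ σ.Csmp S e1 t := by
      apply Finset.le_sup
      simp only [Finset.mem_filter]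
      refine ⟨he1, ?_, Relation.ReflTransGen.refl⟩
      first | rfl | trivial
    refine lt_of_lt_of_le ?_ hLe1
    rw [Execution.Csmp]
    rw [Finset.sup_lt_iff (by simp [Execution.Lsmp])]
    rintro f hf
    simp only [Finset.mem_filter] at hf
    obtain ⟨hfS, hft, hfhb⟩ := hf
    -- f < e1
    have hfe1 : f < e1 := by
      by_contra hcon
      push_neg at hcon
      exact hnhb (Relation.ReflTransGen.trans
        (σ.hb_of_tho' ⟨hcon, ht.symm.trans hft.symm⟩) hfhb)
    -- extract a release r with tho f r and hb r e2
    rcases σ.hb_exit hfhb with htho | ⟨r, hfr, hrrel, hrhb⟩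
    · exact absurd ((ht.symm.trans hft.symm).trans htho.2) hconf.2.1
    have hfrne : f ≠ r := by
      intro h
      obtain ⟨x, hx⟩ := hS f hfS
      obtain ⟨l, hl⟩ := hrrel
      rw [← h] at hl
      rcases hx with hx | hx <;> rw [hx] at hl <;> simp at hl
    have hfrlt : f < r := lt_of_le_of_ne hfr.1 hfrne
    -- minimal release after f in f's thread
    set T : Finset (Fin σ.n) :=
      Finset.univ.filter (fun g => (σ.op g).isRel ∧ σ.sTho f g) with hT
    have hrT : r ∈ T := by
      simp only [hT, Finset.mem_filter]
      exact ⟨Finset.mem_univ _, hrrel, hfrlt, hfr.2⟩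
    have hTne : T.Nonempty := ⟨r, hrT⟩
    set g := T.min' hTne with hg
    have hgT : g ∈ T := T.min'_mem hTne
    simp only [hT, Finset.mem_filter] at hgT
    obtain ⟨-, hgrel, hgsTho⟩ := hgT
    have hgRA : g ∈ σ.RelAfter S := by
      simp only [Execution.RelAfter, Finset.mem_filter]
      refine ⟨Finset.mem_univ _, hgrel, f, hfS, hgsTho, ?_⟩
      intro g' hg'rel hg'sTho hg'g
      have : g ≤ g' := T.min'_le g' (by
        simp only [hT, Finset.mem_filter]
        exact ⟨Finset.mem_univ _, hg'rel, hg'sTho⟩)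
      exact absurd hg'g.1 (not_lt.2 this)
    -- g < e1
    have hge1 : g < e1 := by
      by_contra hcon
      push_neg at hcon
      apply hnhb
      have h1 : σ.hb e1 g := σ.hb_of_tho'
        ⟨hcon, ht.symm.trans (hft.symm.trans hgsTho.2)⟩
      have h2 : σ.hb g r := σ.hb_of_tho'
        ⟨T.min'_le r hrT, by rw [← hgsTho.2, hfr.2]⟩
      exact (h1.trans h2).trans hrhb
    -- strict inclusion of release counts
    have hsub : (σ.RelAfter S).filter (fun h => σ.sTho h f) ⊂
        (σ.RelAfter S).filter (fun h => σ.sTho h e1) := by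
      constructor
      · intro h hh
        simp only [Finset.mem_filter] at hh ⊢
        exact ⟨hh.1, hh.2.1.trans hfe1, hh.2.2.trans (hft.trans ht)⟩
      · intro hcon
        have : g ∈ (σ.RelAfter S).filter (fun h => σ.sTho h f) := by
          apply hcon
          simp only [Finset.mem_filter]
          exact ⟨hgRA, hge1, hgsTho.2.symm.trans (hft.trans ht)⟩
        simp only [Finset.mem_filter] at this
        exact absurd this.2.1 (not_lt.2 hgsTho.1.le)
    have := Finset.card_lt_card hsub
    simp only [Execution.Lsmp]
    omega
  · rintro hlt
    refine ⟨hconf, ?_⟩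
    intro hhb
    have : σ.Csmp S e1 t ≤ σ.Csmp S e2 t := by
      apply Finset.sup_mono
      intro f hf
      simp only [Finset.mem_filter] at hf ⊢
      exact ⟨hf.1, hf.2.1, hf.2.2.trans hhb⟩
    omega
end
end

section
/- Let σ be a lock-well-formed execution and S a finite set of read/write events of σ, and let T = |Threads(σ)|. Then for every event e of σ, VT(e) ≤ |S| · T, and consequently U(e)(t) ≤ |S| · T for every event e and every thread t ∈ Threads(σ). -/
open scoped Classical

noncomputable section

/-!
Along one thread the sampling timestamp only grows, so each update of component `t` strictly
increases it, and the new value is the local time `Lsmp(s)` of some sampled event `s` of thread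
`t`. Hence component `t` is updated at most `|S|` times along a thread, and there are `T`
components.
-/

namespace Execution

variable (σ : Execution) (S : Finset (Fin σ.n))

lemma hb_of_tho {e f : Fin σ.n} (h : σ.tho e f) : σ.hb e f :=
  Relation.ReflTransGen.single (Or.inl h)

lemma csmp_mono {e f : Fin σ.n} (h : σ.hb e f) (t : ℕ) : σ.Csmp S e t ≤ σ.Csmp S f t :=
  Finset.sup_mono fun _ ha => by
    simp only [Finset.mem_filter] at ha ⊢
    exact ⟨ha.1, ha.2.1, ha.2.2.trans h⟩

lemma csmpPrev_le_csmp (f : Fin σ.n) (t : ℕ) : σ.CsmpPrev S f t ≤ σ.Csmp S f t := by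
  unfold CsmpPrev
  split_ifs with h
  · exact σ.csmp_mono S (σ.hb_of_tho ⟨h.choose_spec.1.1.le, h.choose_spec.1.2⟩) t
  · exact Nat.zero_le _

lemma exists_immediate_pred_of_sTho {e f : Fin σ.n} (h : σ.sTho e f) :
    ∃ f' : Fin σ.n, σ.sTho f' f ∧ ∀ g : Fin σ.n, σ.sTho f' g → ¬ σ.sTho g f := by
  have hne : (Finset.univ.filter (σ.sTho · f)).Nonempty := ⟨e, by simp [h]⟩
  refine ⟨_, by simpa using Finset.max'_mem _ hne, fun g hg hgf => ?_⟩
  exact hg.1.not_ge (Finset.le_max' _ g (by simp [hgf]))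

lemma csmp_le_csmpPrev_of_sTho {e f : Fin σ.n} (h : σ.sTho e f) (t : ℕ) :
    σ.Csmp S e t ≤ σ.CsmpPrev S f t := by
  have hex := σ.exists_immediate_pred_of_sTho h
  obtain ⟨⟨-, hthread⟩, himm⟩ := hex.choose_spec
  have hle : e ≤ hex.choose := not_lt.mp fun hlt => himm e ⟨hlt, hthread.trans h.2.symm⟩ h
  rw [CsmpPrev, dif_pos hex]
  exact σ.csmp_mono S (σ.hb_of_tho ⟨hle, h.2.trans hthread.symm⟩) t

def updates (i t : ℕ) : Finset (Fin σ.n) :=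
  Finset.univ.filter fun f => σ.thread f = i ∧ σ.Csmp S f t ≠ σ.CsmpPrev S f t

lemma csmp_strictMonoOn_updates (i t : ℕ) :
    StrictMonoOn (σ.Csmp S · t) (σ.updates S i t : Set (Fin σ.n)) := by
  intro e he f hf hef
  simp only [updates, Finset.coe_filter, Finset.mem_univ, true_and, Set.mem_ofPred_eq] at he hf
  calc σ.Csmp S e t ≤ σ.CsmpPrev S f t :=
        σ.csmp_le_csmpPrev_of_sTho S ⟨hef, he.1.trans hf.1.symm⟩ t
    _ < σ.Csmp S f t := (σ.csmpPrev_le_csmp S f t).lt_of_ne hf.2.symm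

lemma csmp_mem_image_lsmp {f : Fin σ.n} {t : ℕ} (h : σ.Csmp S f t ≠ 0) :
    σ.Csmp S f t ∈ S.image (σ.Lsmp S) := by
  have hne : (S.filter fun g => σ.thread g = t ∧ σ.hb g f).Nonempty := by
    by_contra hemp
    exact h (by rw [Csmp, Finset.not_nonempty_iff_eq_empty.mp hemp, Finset.sup_empty]; rfl)
  obtain ⟨s, hs, hsup⟩ := Finset.exists_mem_eq_sup _ hne (σ.Lsmp S)
  exact Finset.mem_image.mpr ⟨s, (Finset.mem_filter.mp hs).1, hsup.symm⟩

lemma card_updates_le (i t : ℕ) : (σ.updates S i t).card ≤ S.card := by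
  refine (Finset.card_le_card_of_injOn (t := S.image (σ.Lsmp S)) (σ.Csmp S · t)
    (fun f hf => σ.csmp_mem_image_lsmp S ?_) (σ.csmp_strictMonoOn_updates S i t).injOn).trans
    Finset.card_image_le
  have hupd := (Finset.mem_filter.mp hf).2.2
  have hprev := σ.csmpPrev_le_csmp S f t
  omega

lemma vt_le (e : Fin σ.n) : σ.VT S e ≤ S.card * σ.threads.card := by
  have hswap : σ.VT S e = ∑ t ∈ σ.threads, ((Finset.univ.filter (σ.tho · e)).filter
      fun f => σ.Csmp S f t ≠ σ.CsmpPrev S f t).card :=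
    Finset.sum_card_bipartiteAbove_eq_sum_card_bipartiteBelow _
  rw [hswap, mul_comm]
  refine Finset.sum_le_card_nsmul _ _ _ fun t _ => le_trans (Finset.card_le_card ?_)
    (σ.card_updates_le S (σ.thread e) t)
  intro f hf
  simp only [Finset.mem_filter, Finset.mem_univ, true_and, updates] at hf ⊢
  exact ⟨hf.1.2, hf.2⟩

end Execution

theorem stmt18_general (σ : Execution)
    (S : Finset (Fin σ.n))
    (T : ℕ) (hT : T = (σ.threads).card) :
    (∀ e : Fin σ.n, σ.VT S e ≤ S.card * T) ∧
    (∀ e : Fin σ.n, ∀ t ∈ σ.threads, σ.Ufr S e t ≤ S.card * T) := by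
  subst hT
  exact ⟨σ.vt_le S, fun e _ _ => Finset.sup_le fun f _ => σ.vt_le S f⟩

/-- With `T = |Threads σ|`, every event `e` satisfies
`VT(e) ≤ |S|·T`, and consequently `U(e)(t) ≤ |S|·T` for every event `e` and
every thread `t ∈ Threads σ`. -/
theorem stmt18 (σ : Execution) (hwf : σ.LockWellFormed)
    (S : Finset (Fin σ.n)) (hS : ∀ e ∈ S, (σ.op e).isAccess)
    (T : ℕ) (hT : T = (σ.threads).card) :
    (∀ e : Fin σ.n, σ.VT S e ≤ S.card * T) ∧
    (∀ e : Fin σ.n, ∀ t ∈ σ.threads, σ.Ufr S e t ≤ S.card * T) :=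
  stmt18_general σ S T hT
end
end
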